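/- arXiv:0709.2473 — 2 statements merged into one kernel-verified Lean document; each statement's English description precedes it below -/
import Mathlib

section
/- For any positive integer m and complex μ ≠ 0, the *cosquare of H_{2m}(μ) equals J_m(μ) ⊕ J_m(μ)⁻*, which is similar to J_m(μ) ⊕ J_m(μ̄⁻¹). -/
/-!
Block multiplication gives the cosquare directly. For the similarity, conjugating by the reversal
permutation turns `J_m(μ)ᴴ` into `J_m(μ̄)`, so it suffices that `J_m(c)⁻¹` is similar to `J_m(c⁻¹)`.
Writing `J_m(c) = c + N` gives `J_m(c)⁻¹ = c⁻¹ + M` with `M = -c⁻¹ J_m(c)⁻¹ N`; since `J_m(c)⁻¹`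
is invertible and commutes with `N`, `M` is nilpotent of the same maximal index `m` as `N`. In the
basis `M^{m-1} v, …, M v, v`, for any `v` with `M^{m-1} v ≠ 0`, the matrix `M` becomes `N`.
-/

open Matrix

/-- The n×n Jordan block with eigenvalue μ. -/
def JBlock (n : ℕ) (μ : ℂ) : Matrix (Fin n) (Fin n) ℂ :=
  Matrix.of fun i j => if i = j then μ else if (i : ℕ) + 1 = (j : ℕ) then 1 else 0

def SimilarMat {m : Type*} [Fintype m] [DecidableEq m] (A B : Matrix m m ℂ) : Prop :=
  ∃ S : Matrix m m ℂ, IsUnit S ∧ A = S⁻¹ * B * S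

/-- The skew sum `H_{2m}(μ) = [[0, I],[J_m(μ), 0]]`. -/
def Hmat (m : ℕ) (μ : ℂ) : Matrix (Fin m ⊕ Fin m) (Fin m ⊕ Fin m) ℂ :=
  Matrix.fromBlocks 0 1 (JBlock m μ) 0

theorem inv_fromBlocks_zero₁₁_zero₂₂ {ι α : Type*} [Fintype ι] [DecidableEq ι] [CommRing α]
    {B C : Matrix ι ι α} (hB : IsUnit B) (hC : IsUnit C) :
    (fromBlocks 0 B C 0)⁻¹ = fromBlocks 0 C⁻¹ B⁻¹ 0 := by
  refine inv_eq_right_inv ?_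
  rw [fromBlocks_multiply, mul_nonsing_inv B ((isUnit_iff_isUnit_det B).1 hB),
    mul_nonsing_inv C ((isUnit_iff_isUnit_det C).1 hC)]
  simp [fromBlocks_one]

namespace SimilarMat

variable {ι κ : Type*} [Fintype ι] [DecidableEq ι] [Fintype κ] [DecidableEq κ]

theorem of_mul_eq_mul {A B S : Matrix ι ι ℂ} (hS : IsUnit S) (h : A * S = S * B) :
    SimilarMat A B := by
  have hdet := (isUnit_iff_isUnit_det S).1 hS
  refine ⟨S⁻¹, isUnit_nonsing_inv_iff.2 hS, ?_⟩
  rw [nonsing_inv_nonsing_inv S hdet, ← h, Matrix.mul_assoc, mul_nonsing_inv S hdet,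
    Matrix.mul_one]

theorem refl (A : Matrix ι ι ℂ) : SimilarMat A A :=
  of_mul_eq_mul isUnit_one (by rw [Matrix.one_mul, Matrix.mul_one])

theorem trans {A B C : Matrix ι ι ℂ} (hAB : SimilarMat A B) (hBC : SimilarMat B C) :
    SimilarMat A C := by
  obtain ⟨S, hS, rfl⟩ := hAB
  obtain ⟨T, hT, rfl⟩ := hBC
  refine ⟨T * S, hT.mul hS, ?_⟩
  rw [Matrix.mul_inv_rev]
  simp only [Matrix.mul_assoc]

theorem smul_one_add {A B : Matrix ι ι ℂ} (h : SimilarMat A B) (c : ℂ) :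
    SimilarMat (c • 1 + A) (c • 1 + B) := by
  obtain ⟨S, hS, rfl⟩ := h
  refine ⟨S, hS, ?_⟩
  rw [Matrix.mul_add, Matrix.add_mul, Matrix.mul_smul, Matrix.smul_mul, Matrix.mul_one,
    nonsing_inv_mul _ ((isUnit_iff_isUnit_det S).1 hS)]

theorem fromBlocks {A A' : Matrix ι ι ℂ} {B B' : Matrix κ κ ℂ} (hA : SimilarMat A A')
    (hB : SimilarMat B B') : SimilarMat (fromBlocks A 0 0 B) (fromBlocks A' 0 0 B') := by
  obtain ⟨S, hS, rfl⟩ := hA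
  obtain ⟨T, hT, rfl⟩ := hB
  have hSdet := (isUnit_iff_isUnit_det S).1 hS
  have hTdet := (isUnit_iff_isUnit_det T).1 hT
  refine of_mul_eq_mul (S := Matrix.fromBlocks S⁻¹ 0 0 T⁻¹) ?_ ?_
  · rw [isUnit_iff_isUnit_det, det_fromBlocks_zero₂₁]
    exact (isUnit_nonsing_inv_det S hSdet).mul (isUnit_nonsing_inv_det T hTdet)
  · simp only [fromBlocks_multiply, Matrix.mul_zero, Matrix.zero_mul, add_zero, zero_add,
      Matrix.mul_assoc, mul_nonsing_inv _ hSdet, mul_nonsing_inv _ hTdet, Matrix.mul_one]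

end SimilarMat

theorem similarMat_submatrix_equiv {ι : Type*} [Fintype ι] [DecidableEq ι]
    (A : Matrix ι ι ℂ) (e : ι ≃ ι) : SimilarMat (A.submatrix e e) A := by
  refine SimilarMat.of_mul_eq_mul (S := e.toPEquiv.toMatrix) ?_ ?_
  · simp [isUnit_iff_isUnit_det]
  · rw [PEquiv.toMatrix_toPEquiv_mul, PEquiv.mul_toMatrix_toPEquiv, submatrix_submatrix]
    simp

section JordanBlock

variable {n : ℕ}

theorem JBlock_eq_smul_one_add (c : ℂ) : JBlock n c = c • 1 + JBlock n 0 := by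
  ext i j
  by_cases h : i = j <;> simp [JBlock, one_apply, h]

theorem det_JBlock (c : ℂ) : (JBlock n c).det = c ^ n := by
  have hupper : (JBlock n c).IsUpperTriangular := fun i j hij => by
    rw [id, id, Fin.lt_def] at hij
    simp only [JBlock, of_apply]
    rw [if_neg (by rintro rfl; omega), if_neg (by omega)]
  rw [det_of_isUpperTriangular hupper]
  simp [JBlock]

theorem conjTranspose_JBlock (c : ℂ) :
    (JBlock n c)ᴴ = (JBlock n (starRingEnd ℂ c)).submatrix Fin.revPerm Fin.revPerm := by
  ext i j
  have hsucc : ((Fin.rev i : ℕ) + 1 = Fin.rev j) ↔ ((j : ℕ) + 1 = i) := by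
    simp only [Fin.val_rev]; omega
  simp only [conjTranspose_apply, JBlock, of_apply, submatrix_apply, Fin.revPerm_apply,
    Fin.rev_inj, hsucc, eq_comm (a := i)]
  split_ifs <;> simp

theorem JBlock_zero_apply (i j : Fin n) :
    JBlock n 0 i j = if (i : ℕ) + 1 = j then 1 else 0 := by
  simp only [JBlock, of_apply]
  split_ifs with h <;> first | rfl | (subst h; omega)

theorem mul_JBlock_zero_apply {l : Type*} (A : Matrix l (Fin n) ℂ) (i : l) (j : Fin n) :
    (A * JBlock n 0) i j = if h : (j : ℕ) = 0 then 0 else A i ⟨j - 1, by omega⟩ := by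
  simp only [mul_apply, JBlock_zero_apply, mul_ite, mul_one, mul_zero]
  split_ifs with hj
  · exact Finset.sum_eq_zero fun k _ => if_neg (by omega)
  · rw [Finset.sum_eq_single_of_mem ⟨j - 1, by omega⟩ (Finset.mem_univ _)]
    · rw [if_pos (by simp; omega)]
    · intro k _ hk
      exact if_neg fun h => hk (Fin.ext (by simp; omega))

theorem JBlock_zero_pow_apply (k : ℕ) (i j : Fin n) :
    (JBlock n 0 ^ k) i j = if (i : ℕ) + k = j then 1 else 0 := by
  induction k generalizing j with
  | zero => simp [one_apply, Fin.ext_iff]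
  | succ k ih =>
    rw [pow_succ, mul_JBlock_zero_apply]
    split_ifs <;> simp_all <;> omega

theorem JBlock_zero_pow_self : JBlock n 0 ^ n = 0 := by
  ext i j
  rw [JBlock_zero_pow_apply, if_neg (by omega), Matrix.zero_apply]

theorem JBlock_zero_pow_pred_ne_zero (hn : 0 < n) : JBlock n 0 ^ (n - 1) ≠ 0 := fun h => by
  simpa [JBlock_zero_pow_apply] using congr_fun₂ h ⟨0, hn⟩ ⟨n - 1, by omega⟩

end JordanBlock

theorem Module.End.linearIndependent_pow_apply {K V : Type*} [Field K] [AddCommGroup V]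
    [Module K V] {f : Module.End K V} {n : ℕ} {v : V} (hn : (f ^ n) v = 0)
    (hv : (f ^ (n - 1)) v ≠ 0) : LinearIndependent K fun k : Fin n => (f ^ (k : ℕ)) v := by
  have hvanish : ∀ k, n ≤ k → (f ^ k) v = 0 := fun k hk => by
    obtain ⟨d, rfl⟩ := Nat.exists_eq_add_of_le hk
    rw [add_comm, pow_add, Module.End.mul_apply, hn, map_zero]
  rw [Fintype.linearIndependent_iff]
  intro g hg i
  induction i using Fin.strong_induction_on with
  | _ i ih =>
    -- applying `f ^ (n - 1 - i)` kills the terms `j > i`, and those with `j < i` vanish by `ih`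
    have hkill := congrArg (f ^ (n - 1 - i)) hg
    rw [map_sum, map_zero, Finset.sum_eq_single_of_mem i (Finset.mem_univ _)] at hkill
    · rw [map_smul, ← Module.End.mul_apply, ← pow_add, Nat.sub_add_cancel (by omega)] at hkill
      exact (smul_eq_zero.1 hkill).resolve_right hv
    · intro j _ hji
      rcases lt_or_gt_of_ne hji with hlt | hgt
      · rw [ih j hlt, zero_smul, map_zero]
      · rw [map_smul, ← Module.End.mul_apply, ← pow_add, hvanish _ (by omega), smul_zero]

section CyclicMatrix

variable {K : Type*} {n : ℕ}

def cyclicMatrix [CommRing K] (M : Matrix (Fin n) (Fin n) K) (v : Fin n → K) :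
    Matrix (Fin n) (Fin n) K :=
  Matrix.of fun i j => (M ^ (j.rev : ℕ) *ᵥ v) i

theorem isUnit_cyclicMatrix [Field K] {M : Matrix (Fin n) (Fin n) K} {v : Fin n → K}
    (hn : M ^ n *ᵥ v = 0) (hv : M ^ (n - 1) *ᵥ v ≠ 0) : IsUnit (cyclicMatrix M v) := by
  have hli := Module.End.linearIndependent_pow_apply (f := toLin' M) (v := v)
    (by rwa [← toLin'_pow, toLin'_apply]) (by rwa [← toLin'_pow, toLin'_apply])
  have hcols : (cyclicMatrix M v).col = (fun k : Fin n => (toLin' M ^ (k : ℕ)) v) ∘ Fin.rev := by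
    ext j i
    simp [cyclicMatrix, col_apply, ← toLin'_pow]
  rw [← linearIndependent_cols_iff_isUnit, hcols]
  exact hli.comp Fin.rev Fin.rev_injective

theorem mul_cyclicMatrix {M : Matrix (Fin n) (Fin n) ℂ} {v : Fin n → ℂ} (hn : M ^ n *ᵥ v = 0) :
    M * cyclicMatrix M v = cyclicMatrix M v * JBlock n 0 := by
  ext i j
  have hshift : (M * cyclicMatrix M v) i j = (M ^ ((j.rev : ℕ) + 1) *ᵥ v) i := by
    rw [pow_succ', ← mulVec_mulVec]
    rfl
  rw [hshift, mul_JBlock_zero_apply]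
  split_ifs with hj
  · rw [Fin.val_rev, hj, Nat.sub_add_cancel (by omega), hn, Pi.zero_apply]
  · simp only [cyclicMatrix, of_apply, Fin.val_rev]
    congr 3
    omega

end CyclicMatrix

theorem similarMat_JBlock_zero_of_pow {n : ℕ} {M : Matrix (Fin n) (Fin n) ℂ}
    (hn : M ^ n = 0) (hpred : M ^ (n - 1) ≠ 0) : SimilarMat M (JBlock n 0) := by
  obtain ⟨v, hv⟩ : ∃ v, M ^ (n - 1) *ᵥ v ≠ 0 := by
    by_contra! h
    exact hpred (ext_of_mulVec_single fun j => by rw [h, zero_mulVec])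
  have hnv : M ^ n *ᵥ v = 0 := by rw [hn, zero_mulVec]
  exact SimilarMat.of_mul_eq_mul (isUnit_cyclicMatrix hnv hv) (mul_cyclicMatrix hnv)

theorem similarMat_inv_JBlock {n : ℕ} {c : ℂ} (hc : c ≠ 0) :
    SimilarMat (JBlock n c)⁻¹ (JBlock n c⁻¹) := by
  rcases Nat.eq_zero_or_pos n with rfl | hn
  · exact SimilarMat.of_mul_eq_mul isUnit_one (Subsingleton.elim _ _)
  set J := JBlock n c
  set N := JBlock n 0
  have hdet : IsUnit J.det := by rw [det_JBlock]; exact (pow_ne_zero n hc).isUnit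
  have hJ : J = c • 1 + N := JBlock_eq_smul_one_add c
  have hinv : J⁻¹ = c⁻¹ • 1 + (-c⁻¹) • (J⁻¹ * N) := by
    have h1 : c • J⁻¹ + J⁻¹ * N = 1 := by
      rw [← nonsing_inv_mul J hdet, hJ, Matrix.mul_add, Matrix.mul_smul, Matrix.mul_one]
    rw [← h1, smul_add, smul_smul, inv_mul_cancel₀ hc, one_smul, neg_smul, add_neg_cancel_right]
  have hcomm : Commute J⁻¹ N := by
    have hN : N = J - c • 1 := by rw [hJ]; abel
    rw [hN]
    exact Commute.sub_right ((nonsing_inv_mul J hdet).trans (mul_nonsing_inv J hdet).symm)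
      ((Commute.one_right _).smul_right c)
  have hpow : ∀ k, ((-c⁻¹) • (J⁻¹ * N)) ^ k = (-c⁻¹) ^ k • (J⁻¹ ^ k * N ^ k) := fun k => by
    rw [smul_pow, hcomm.mul_pow]
  rw [hinv, JBlock_eq_smul_one_add c⁻¹]
  refine (similarMat_JBlock_zero_of_pow ?_ ?_).smul_one_add c⁻¹
  · rw [hpow, JBlock_zero_pow_self, Matrix.mul_zero, smul_zero]
  · have hunit : IsUnit (J⁻¹ ^ (n - 1)) :=
      (isUnit_nonsing_inv_iff.2 ((isUnit_iff_isUnit_det J).2 hdet)).pow _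
    rw [hpow, smul_ne_zero_iff, Ne, Ne, hunit.mul_right_eq_zero]
    exact ⟨pow_ne_zero _ (by simpa using hc), JBlock_zero_pow_pred_ne_zero hn⟩

theorem starCosquare_Hmat_general (m : ℕ) (μ : ℂ) (hμ : μ ≠ 0) :
    ((Hmat m μ)ᴴ)⁻¹ * Hmat m μ =
      Matrix.fromBlocks (JBlock m μ) 0 0 (((JBlock m μ)ᴴ)⁻¹) ∧
    SimilarMat (Matrix.fromBlocks (JBlock m μ) 0 0 (((JBlock m μ)ᴴ)⁻¹))
      (Matrix.fromBlocks (JBlock m μ) 0 0 (JBlock m ((starRingEnd ℂ μ))⁻¹)) := by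
  have hJ : IsUnit (JBlock m μ)ᴴ := by
    rw [isUnit_iff_isUnit_det, det_conjTranspose, det_JBlock]
    exact (star_ne_zero.2 (pow_ne_zero m hμ)).isUnit
  refine ⟨?_, SimilarMat.fromBlocks (.refl _) ?_⟩
  · rw [Hmat, fromBlocks_conjTranspose, conjTranspose_zero, conjTranspose_one,
      inv_fromBlocks_zero₁₁_zero₂₂ hJ isUnit_one, inv_one, fromBlocks_multiply]
    simp
  · rw [conjTranspose_JBlock, inv_submatrix_equiv]
    exact (similarMat_submatrix_equiv _ _).trans (similarMat_inv_JBlock (by simpa using hμ))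

/-- For `μ ≠ 0`, the *cosquare of `H_{2m}(μ)` equals `J_m(μ) ⊕ J_m(μ)⁻*`, which is
similar to `J_m(μ) ⊕ J_m(μ̄⁻¹)`. -/
theorem starCosquare_Hmat (m : ℕ) (hm : 0 < m) (μ : ℂ) (hμ : μ ≠ 0) :
    ((Hmat m μ)ᴴ)⁻¹ * Hmat m μ =
      Matrix.fromBlocks (JBlock m μ) 0 0 (((JBlock m μ)ᴴ)⁻¹) ∧
    SimilarMat (Matrix.fromBlocks (JBlock m μ) 0 0 (((JBlock m μ)ᴴ)⁻¹))
      (Matrix.fromBlocks (JBlock m μ) 0 0 (JBlock m ((starRingEnd ℂ μ))⁻¹)) :=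
  starCosquare_Hmat_general m μ hμ
end

section
/- Let λ be a unimodular complex number with λ² ≠ -1, write λ = a + ib with a = Re λ ≠ 0, and let A = [[0, λ/a],[λ/a, i]]. Then the *cosquare of A is similar to J₂(λ²), and A is *congruent to λΔ₂ if a > 0, and to -λΔ₂ if a < 0. -/
/-!
Write `c = λ / Re λ` and `A = [[0, c], [c, i]]`. Inverting `A*` explicitly gives the upper
triangular cosquare `[[c / c̄, i (c + c̄) / c̄²], [0, c / c̄]]`; for unimodular `λ` its diagonal
is `λ / λ̄ = λ²` and, since `Re c = 1`, its corner is nonzero, so it is similar to `J₂(λ²)`.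

For the *congruence, `A` is unchanged when `λ` is replaced by `μ = ±λ`, so we may take
`Re μ > 0` and aim at `μ Δ₂`. A real upper triangular `S = [[s, t], [0, q]]` gives
`S* (μ Δ₂) S = [[0, s q μ], [s q μ, μ (2 t q + i q²)]]`, and matching this with `A` only asks
for `q² = Re μ / |μ|² > 0`.
-/

open Matrix Complex

def MatSimilar {m : Type*} [Fintype m] [DecidableEq m] (A B : Matrix m m ℂ) : Prop :=
  ∃ S : Matrix m m ℂ, IsUnit S ∧ A = S⁻¹ * B * S

def StarCongruent {m : Type*} [Fintype m] [DecidableEq m] (A B : Matrix m m ℂ) : Prop :=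
  ∃ S : Matrix m m ℂ, IsUnit S ∧ A = Sᴴ * B * S

open ComplexConjugate

theorem re_ne_zero_of_norm_eq_one_of_sq_ne_neg_one {z : ℂ} (hz : ‖z‖ = 1) (h : z ^ 2 ≠ -1) :
    z.re ≠ 0 := by
  intro hre
  have him : z.im ^ 2 = 1 := by
    have := Complex.sq_norm z
    rw [hz, normSq_apply, hre] at this
    nlinarith
  exact h (Complex.ext (by simp [sq, hre]; nlinarith) (by simp [sq, hre]))

theorem conjTranspose_fin_two_of (a b c d : ℂ) :
    (!![a, b; c, d] : Matrix (Fin 2) (Fin 2) ℂ)ᴴ = !![conj a, conj c; conj b, conj d] := by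
  ext i j; fin_cases i <;> fin_cases j <;> rfl

theorem JBlock_two (μ : ℂ) : JBlock 2 μ = !![μ, 1; 0, μ] := by
  ext i j; fin_cases i <;> fin_cases j <;> simp [JBlock]

theorem matSimilar_JBlock_two {μ x : ℂ} (hx : x ≠ 0) :
    MatSimilar !![μ, x; 0, μ] (JBlock 2 μ) := by
  have hS : IsUnit (!![1, 0; 0, x] : Matrix (Fin 2) (Fin 2) ℂ) := by
    simp [Matrix.isUnit_iff_isUnit_det, det_fin_two_of, hx]
  have hinv : (!![1, 0; 0, x] : Matrix (Fin 2) (Fin 2) ℂ)⁻¹ = !![1, 0; 0, x⁻¹] :=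
    Matrix.inv_eq_left_inv (by ext i j; fin_cases i <;> fin_cases j <;> simp [hx])
  refine ⟨!![1, 0; 0, x], hS, ?_⟩
  rw [JBlock_two, hinv]
  ext i j; fin_cases i <;> fin_cases j <;> simp; field_simp

noncomputable def cosquare {m : Type*} [Fintype m] [DecidableEq m] (A : Matrix m m ℂ) : Matrix m m ℂ :=
  (Aᴴ)⁻¹ * A

theorem cosquare_zero_c_c_I {c : ℂ} (hc : c ≠ 0) :
    cosquare !![0, c; c, I] =
      !![c / conj c, I * (c + conj c) / conj c ^ 2; 0, c / conj c] := by
  have hc' : conj c ≠ 0 := (map_ne_zero _).mpr hc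
  have : Invertible (!![0, c; c, I] : Matrix (Fin 2) (Fin 2) ℂ)ᴴ :=
    Matrix.invertibleOfIsUnitDet _ (by simp [det_fin_two_of, hc])
  rw [cosquare, Matrix.inv_mul_eq_iff_eq_mul_of_invertible, conjTranspose_fin_two_of, mul_fin_two]
  ext i j; fin_cases i <;> fin_cases j <;> simp <;> field_simp
  ring

theorem conjTranspose_mul_smul_mul_of_real (μ : ℂ) (s t q : ℝ) :
    (!![(s : ℂ), t; 0, q])ᴴ * (μ • !![0, 1; 1, I]) * !![(s : ℂ), t; 0, q] =
      !![0, s * q * μ; s * q * μ, μ * (2 * t * q + q ^ 2 * I)] := by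
  simp only [conjTranspose_fin_two_of, smul_of, smul_cons, smul_empty, smul_eq_mul, mul_fin_two,
    map_zero, conj_ofReal]
  ext i j; fin_cases i <;> fin_cases j <;> simp <;> ring

theorem starCongruent_of_re_pos {μ : ℂ} (h : 0 < μ.re) :
    StarCongruent (!![0, μ / (μ.re : ℂ); μ / (μ.re : ℂ), I] : Matrix (Fin 2) (Fin 2) ℂ)
      (μ • !![0, 1; 1, I]) := by
  have hN : 0 < normSq μ := normSq_pos.mpr (by rintro rfl; simp at h)
  set q := Real.sqrt (μ.re / normSq μ)
  have hq : 0 < q := Real.sqrt_pos.mpr (div_pos h hN)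
  have hq2 : q ^ 2 = μ.re / normSq μ := Real.sq_sqrt (div_pos h hN).le
  -- `s q = 1 / Re μ` and `2 t q + i q² = i / μ = (Im μ + i Re μ) / |μ|²`
  refine ⟨!![((1 / (μ.re * q) : ℝ) : ℂ), ((μ.im / (2 * q * normSq μ) : ℝ) : ℂ); 0, (q : ℂ)],
    by simp [Matrix.isUnit_iff_isUnit_det, det_fin_two_of, h.ne', hq.ne'], ?_⟩
  rw [conjTranspose_mul_smul_mul_of_real]
  have hqC : (q : ℂ) ≠ 0 := ofReal_ne_zero.mpr hq.ne'
  have hNC : (normSq μ : ℂ) ≠ 0 := ofReal_ne_zero.mpr hN.ne'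
  have hq2C : (q : ℂ) ^ 2 * normSq μ = μ.re := by
    rw [← ofReal_pow, hq2, ← ofReal_mul, div_mul_cancel₀ _ hN.ne']
  have hnormSq : (normSq μ : ℂ) = μ.re ^ 2 + μ.im ^ 2 := by push_cast [normSq_apply]; ring
  have hoff : ((1 / (μ.re * q) : ℝ) : ℂ) * q * μ = μ / μ.re := by push_cast; field_simp
  have hcorner : μ * (2 * ((μ.im / (2 * q * normSq μ) : ℝ) : ℂ) * q + q ^ 2 * I) = I := by
    push_cast
    field_simp
    linear_combination μ * I * hq2C + (μ.im + μ.re * I) * (re_add_im μ).symm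
      - I * hnormSq + μ.re * μ.im * I_sq
  rw [hoff, hcorner]

/-- For unimodular `λ` with `λ² ≠ -1` and `a = Re λ` (so `a ≠ 0`), the matrix
`A = [[0, λ/a],[λ/a, i]]` has *cosquare similar to `J₂(λ²)`, and `A` is *congruent to
`λΔ₂` if `a > 0` and to `-λΔ₂` if `a < 0` (where `Δ₂ = [[0,1],[1,i]]`). -/
theorem example3 (lam : ℂ) (hlam : ‖lam‖ = 1) (h2 : lam ^ 2 ≠ -1) :
    lam.re ≠ 0 ∧
    MatSimilar (((!![0, lam / (lam.re : ℂ); lam / (lam.re : ℂ), I] :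
        Matrix (Fin 2) (Fin 2) ℂ)ᴴ)⁻¹ * !![0, lam / (lam.re : ℂ); lam / (lam.re : ℂ), I])
      (JBlock 2 (lam ^ 2)) ∧
    (0 < lam.re →
      StarCongruent (!![0, lam / (lam.re : ℂ); lam / (lam.re : ℂ), I] :
        Matrix (Fin 2) (Fin 2) ℂ) (lam • !![0, 1; 1, I])) ∧
    (lam.re < 0 →
      StarCongruent (!![0, lam / (lam.re : ℂ); lam / (lam.re : ℂ), I] :
        Matrix (Fin 2) (Fin 2) ℂ) (-(lam • !![0, 1; 1, I]))) := by
  have hre := re_ne_zero_of_norm_eq_one_of_sq_ne_neg_one hlam h2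
  have hreC : (lam.re : ℂ) ≠ 0 := ofReal_ne_zero.mpr hre
  have hlam0 : lam ≠ 0 := by rintro rfl; simp at hlam
  refine ⟨hre, ?_, starCongruent_of_re_pos, fun hneg => ?_⟩
  · have hdiag : lam / lam.re / conj (lam / lam.re) = lam ^ 2 := by
      rw [map_div₀, conj_ofReal, div_div_div_cancel_right₀ hreC, ← inv_eq_conj hlam,
        div_inv_eq_mul, sq]
    change MatSimilar (cosquare _) _
    rw [cosquare_zero_c_c_I (div_ne_zero hlam0 hreC), hdiag]
    refine matSimilar_JBlock_two ?_
    rw [add_conj]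
    simp [hre, hlam0]
  · have := starCongruent_of_re_pos (μ := -lam) (by simpa using hneg)
    simpa [neg_div_neg_eq] using this
end
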